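/- Let S be a set of n points in convex position such that t(S) is to the right of b(S), let m be the number of points of S strictly to the left of the line through b(S) and t(S), and let P = d_1,...,d_{n-1} be a {U,D,R}-labeled path with d_m = D and d_{m+1} ∈ {U,R}. If P_{1,m} has a planar direction-consistent embedding on S_ℓ ∪ {b(S)} mapping v_{m+1} to b(S), and P', the subpath on vertices v_{m+1},...,v_n, has a planar direction-consistent embedding on S_r ∪ {t(S), b(S)} mapping v_{m+1} to b(S), then the union of these two embeddings is a planar direction-consistent embedding of P on S. -/

import Mathlib

/-- Edge direction labels. -/
inductive Dir | U | D | L | R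
deriving DecidableEq

/-- Opposite label: U↔D, L↔R. -/
def Dir.opp : Dir → Dir
  | .U => .D | .D => .U | .L => .R | .R => .L

/-- Label after counterclockwise rotation by π/2: U↦L, D↦R, R↦U, L↦D. -/
def Dir.rot : Dir → Dir
  | .U => .L | .D => .R | .R => .U | .L => .D

/-- Label after vertical-line reflection: U↦U, D↦D, R↦L, L↦R. -/
def Dir.mir : Dir → Dir
  | .U => .U | .D => .D | .R => .L | .L => .R

/-- An edge from `a` to `b` is consistent with a direction label. -/
def dirOk : Dir → ℝ × ℝ → ℝ × ℝ → Prop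
  | .U, a, b => a.2 < b.2
  | .D, a, b => b.2 < a.2
  | .R, a, b => a.1 < b.1
  | .L, a, b => b.1 < a.1

/-- The drawing of a path with edge labels `d` and vertex placement `E` is
direction-consistent. -/
def DirConsistent {m : ℕ} (d : Fin m → Dir) (E : Fin (m + 1) → ℝ × ℝ) : Prop :=
  ∀ i : Fin m, dirOk (d i) (E i.castSucc) (E i.succ)

/-- The straight-line drawing of the path with vertex placement `E` is planar:
non-adjacent segments are disjoint; adjacent segments meet only at the shared endpoint. -/
def PlanarDrawing {m : ℕ} (E : Fin (m + 1) → ℝ × ℝ) : Prop :=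
  (∀ i j : Fin m, (i : ℕ) + 1 < (j : ℕ) →
    segment ℝ (E i.castSucc) (E i.succ) ∩ segment ℝ (E j.castSucc) (E j.succ) = ∅) ∧
  (∀ i j : Fin m, (i : ℕ) + 1 = (j : ℕ) →
    segment ℝ (E i.castSucc) (E i.succ) ∩ segment ℝ (E j.castSucc) (E j.succ) = {E i.succ})

/-- `E` is an embedding of the path vertices onto the point set `S`. -/
def EmbOn {m : ℕ} (E : Fin (m + 1) → ℝ × ℝ) (S : Set (ℝ × ℝ)) : Prop :=
  Function.Injective E ∧ Set.range E = S

/-- Planar direction-consistent embedding of the labeled path `d` on `S`. -/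
def PDCE {m : ℕ} (d : Fin m → Dir) (E : Fin (m + 1) → ℝ × ℝ) (S : Set (ℝ × ℝ)) : Prop :=
  EmbOn E S ∧ DirConsistent d E ∧ PlanarDrawing E

/-- `S` is in convex position. -/
def ConvexPos (S : Set (ℝ × ℝ)) : Prop :=
  ConvexIndependent ℝ ((↑) : S → ℝ × ℝ)

/-- No three distinct points of `S` are collinear. -/
def NoThreeCollinear (S : Set (ℝ × ℝ)) : Prop :=
  ∀ p ∈ S, ∀ q ∈ S, ∀ r ∈ S, p ≠ q → p ≠ r → q ≠ r →
    ¬ Collinear ℝ ({p, q, r} : Set (ℝ × ℝ))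

/-- General position: no three collinear, no two points with equal x- or y-coordinate. -/
def GenPos (S : Set (ℝ × ℝ)) : Prop :=
  NoThreeCollinear S ∧ ∀ p ∈ S, ∀ q ∈ S, p ≠ q → p.1 ≠ q.1 ∧ p.2 ≠ q.2

def IsTopmost (S : Set (ℝ × ℝ)) (t : ℝ × ℝ) : Prop :=
  t ∈ S ∧ ∀ p ∈ S, p ≠ t → p.2 < t.2
def IsBottommost (S : Set (ℝ × ℝ)) (b : ℝ × ℝ) : Prop :=
  b ∈ S ∧ ∀ p ∈ S, p ≠ b → b.2 < p.2
def IsLeftmost (S : Set (ℝ × ℝ)) (l : ℝ × ℝ) : Prop :=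
  l ∈ S ∧ ∀ p ∈ S, p ≠ l → l.1 < p.1
def IsRightmost (S : Set (ℝ × ℝ)) (r : ℝ × ℝ) : Prop :=
  r ∈ S ∧ ∀ p ∈ S, p ≠ r → p.1 < r.1

/-- Cross product telling on which side of the directed line `a → b` the point `p` lies
(`0 < cross a b p` means `p` is strictly to the left). -/
def cross (a b p : ℝ × ℝ) : ℝ :=
  (b.1 - a.1) * (p.2 - a.2) - (b.2 - a.2) * (p.1 - a.1)

/-- With `b` bottommost and `t` topmost, all other points lie strictly to the left of the
line through `b` and `t`. -/
def LeftSided (S : Set (ℝ × ℝ)) (b t : ℝ × ℝ) : Prop :=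
  IsBottommost S b ∧ IsTopmost S t ∧ ∀ p ∈ S, p ≠ b → p ≠ t → 0 < cross b t p

/-- With `b` bottommost and `t` topmost, all other points lie strictly to the right of the
line through `b` and `t`. -/
def RightSided (S : Set (ℝ × ℝ)) (b t : ℝ × ℝ) : Prop :=
  IsBottommost S b ∧ IsTopmost S t ∧ ∀ p ∈ S, p ≠ b → p ≠ t → cross b t p < 0

/-- Two points of `S` are consecutive on the convex hull of `S`: all other points of `S`
lie strictly on one side of the line through them. -/
def HullConsecutive (S : Set (ℝ × ℝ)) (p q : ℝ × ℝ) : Prop :=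
  p ∈ S ∧ q ∈ S ∧ p ≠ q ∧
    ((∀ r ∈ S, r ≠ p → r ≠ q → 0 < cross p q r) ∨
     (∀ r ∈ S, r ≠ p → r ≠ q → cross p q r < 0))

/-- Strip-convex point set with bottommost `b`, leftmost `l`, topmost `t`, rightmost `r`:
`b` and `l` coincide or are hull-consecutive, and so do `t` and `r`. -/
def StripConvex (S : Set (ℝ × ℝ)) (b l t r : ℝ × ℝ) : Prop :=
  IsBottommost S b ∧ IsLeftmost S l ∧ IsTopmost S t ∧ IsRightmost S r ∧
    (b = l ∨ HullConsecutive S b l) ∧ (t = r ∨ HullConsecutive S t r)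

/-- `T` is a consecutive subset of the convex point set `S` along its hull:
it can be separated from `S \ T` by a line. -/
def Consecutive (S T : Set (ℝ × ℝ)) : Prop :=
  T ⊆ S ∧ ∃ f : (ℝ × ℝ) →ₗ[ℝ] ℝ, ∃ c : ℝ,
    (∀ p ∈ T, c < f p) ∧ ∀ p ∈ S \ T, f p < c

/-!
All of `S_ℓ ∪ {b}` lies in the closed half-plane left of the line `bt` and meets that line only
in `b`, while `S_r ∪ {t, b}` lies in the closed half-plane to its right. So an edge of the first
drawing and an edge of the second can meet only in `b`. In a planar drawing of a path with
distinct vertices an end vertex lies on no edge except the one incident to it, so `b` is met only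
by the last edge of the first drawing and the first edge of the second, and the glued drawing is
planar. By general position no point of `S` other than `b` and `t` is on the line, so the two
vertex sets cover `S` and share only `b`.
-/

section PathAppend

variable {α : Type*} {m s : ℕ}

def pathAppend (E₁ : Fin (m + 1) → α) (E₂ : Fin (s + 1) → α) : Fin (m + s + 1) → α :=
  fun j => if h : (j : ℕ) ≤ m then E₁ ⟨j, Nat.lt_succ_of_le h⟩
    else E₂ ⟨j - m, Nat.sub_lt_left_of_lt_add (Nat.le_of_not_le h) j.isLt⟩

variable {E₁ : Fin (m + 1) → α} {E₂ : Fin (s + 1) → α}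

lemma pathAppend_of_le (j : Fin (m + s + 1)) (hj : (j : ℕ) ≤ m) :
    pathAppend E₁ E₂ j = E₁ ⟨j, Nat.lt_succ_of_le hj⟩ :=
  dif_pos hj

lemma pathAppend_of_ge (hjoin : E₁ (Fin.last m) = E₂ 0) (j : Fin (m + s + 1))
    (hj : m ≤ (j : ℕ)) : pathAppend E₁ E₂ j = E₂ ⟨j - m, by omega⟩ := by
  rcases hj.eq_or_lt with hj | hj
  · have hlast : (⟨j, by omega⟩ : Fin (m + 1)) = Fin.last m := Fin.ext hj.symm
    have hzero : (⟨j - m, by omega⟩ : Fin (s + 1)) = 0 := Fin.ext (by simp; omega)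
    rw [pathAppend_of_le j hj.ge, hlast, hzero, hjoin]
  · exact dif_neg (by omega)

lemma pathAppend_castSucc_of_lt (i : Fin (m + s)) (hi : (i : ℕ) < m) :
    pathAppend E₁ E₂ i.castSucc = E₁ (Fin.castSucc ⟨i, hi⟩) :=
  pathAppend_of_le _ hi.le

lemma pathAppend_succ_of_lt (i : Fin (m + s)) (hi : (i : ℕ) < m) :
    pathAppend E₁ E₂ i.succ = E₁ (Fin.succ ⟨i, hi⟩) :=
  pathAppend_of_le _ hi

lemma pathAppend_castSucc_of_ge (hjoin : E₁ (Fin.last m) = E₂ 0) (i : Fin (m + s))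
    (hi : m ≤ (i : ℕ)) :
    pathAppend E₁ E₂ i.castSucc = E₂ (Fin.castSucc ⟨i - m, by omega⟩) :=
  pathAppend_of_ge hjoin _ hi

lemma pathAppend_succ_of_ge (hjoin : E₁ (Fin.last m) = E₂ 0) (i : Fin (m + s))
    (hi : m ≤ (i : ℕ)) :
    pathAppend E₁ E₂ i.succ = E₂ (Fin.succ ⟨i - m, by omega⟩) := by
  rw [pathAppend_of_ge hjoin _ (by simp; omega)]
  exact congrArg E₂ (Fin.ext (by simp; omega))

lemma range_pathAppend (hjoin : E₁ (Fin.last m) = E₂ 0) :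
    Set.range (pathAppend E₁ E₂) = Set.range E₁ ∪ Set.range E₂ := by
  apply Set.Subset.antisymm
  · rintro _ ⟨j, rfl⟩
    rcases le_total (j : ℕ) m with hj | hj
    · exact Or.inl ⟨_, (pathAppend_of_le j hj).symm⟩
    · exact Or.inr ⟨_, (pathAppend_of_ge hjoin j hj).symm⟩
  · rintro _ (⟨k, rfl⟩ | ⟨k, rfl⟩)
    · exact ⟨⟨k, by omega⟩, pathAppend_of_le _ (Nat.lt_succ_iff.1 k.isLt)⟩
    · refine ⟨⟨m + k, by omega⟩, ?_⟩
      rw [pathAppend_of_ge hjoin _ (Nat.le_add_right _ _)]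
      exact congrArg E₂ (Fin.ext (by simp))

lemma Function.Injective.pathAppend (inj₁ : E₁.Injective) (inj₂ : E₂.Injective)
    (hjoin : E₁ (Fin.last m) = E₂ 0)
    (hmeet : ∀ k l, E₁ k = E₂ l → k = Fin.last m ∧ l = 0) :
    (pathAppend E₁ E₂).Injective := by
  have hmeet' : ∀ k l, E₁ k = E₂ l → (k : ℕ) = m ∧ (l : ℕ) = 0 := fun k l h => by
    obtain ⟨rfl, rfl⟩ := hmeet k l h
    exact ⟨rfl, rfl⟩
  intro j₁ j₂ h
  apply Fin.ext
  rcases le_total (j₁ : ℕ) m with h₁ | h₁ <;> rcases le_total (j₂ : ℕ) m with h₂ | h₂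
  · rw [pathAppend_of_le _ h₁, pathAppend_of_le _ h₂] at h
    exact Fin.mk.inj (inj₁ h)
  · rw [pathAppend_of_le _ h₁, pathAppend_of_ge hjoin _ h₂] at h
    have := hmeet' _ _ h; simp only at this; omega
  · rw [pathAppend_of_ge hjoin _ h₁, pathAppend_of_le _ h₂] at h
    have := hmeet' _ _ h.symm; simp only at this; omega
  · rw [pathAppend_of_ge hjoin _ h₁, pathAppend_of_ge hjoin _ h₂] at h
    have := Fin.mk.inj (inj₂ h); omega

end PathAppend

section Drawing

variable {n : ℕ} {E : Fin (n + 1) → ℝ × ℝ}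

def edgeSegment (E : Fin (n + 1) → ℝ × ℝ) (i : Fin n) : Set (ℝ × ℝ) :=
  segment ℝ (E i.castSucc) (E i.succ)

lemma PlanarDrawing.succ_eq_of_last_mem (h : PlanarDrawing E) (inj : E.Injective) (i : Fin n)
    (hi : E (Fin.last n) ∈ edgeSegment E i) : (i : ℕ) + 1 = n := by
  by_contra hne
  let j : Fin n := ⟨n - 1, by omega⟩
  have hlast : j.succ = Fin.last n := Fin.ext (by simp [j]; omega)
  have hj : E (Fin.last n) ∈ edgeSegment E j := hlast ▸ right_mem_segment ℝ _ _
  rcases (show (i : ℕ) + 1 < j ∨ (i : ℕ) + 1 = j by simp [j]; omega) with hij | hij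
  · exact (h.1 i j hij).subset ⟨hi, hj⟩
  · have := inj ((h.2 i j hij).subset ⟨hi, hj⟩)
    exact hne (by simpa [Fin.ext_iff] using this.symm)

lemma PlanarDrawing.eq_zero_of_zero_mem (h : PlanarDrawing E) (inj : E.Injective) (j : Fin n)
    (hj : E 0 ∈ edgeSegment E j) : (j : ℕ) = 0 := by
  by_contra hne
  let i : Fin n := ⟨0, by omega⟩
  have hi : E 0 ∈ edgeSegment E i := left_mem_segment ℝ _ _
  rcases (show (i : ℕ) + 1 < j ∨ (i : ℕ) + 1 = j by simp [i]; omega) with hij | hij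
  · exact (h.1 i j hij).subset ⟨hi, hj⟩
  · have := inj ((h.2 i j hij).subset ⟨hi, hj⟩)
    simp [Fin.ext_iff, i] at this

variable {m s : ℕ} {E₁ : Fin (m + 1) → ℝ × ℝ} {E₂ : Fin (s + 1) → ℝ × ℝ}

lemma edgeSegment_pathAppend_of_lt (i : Fin (m + s)) (hi : (i : ℕ) < m) :
    edgeSegment (pathAppend E₁ E₂) i = edgeSegment E₁ ⟨i, hi⟩ := by
  rw [edgeSegment, pathAppend_castSucc_of_lt i hi, pathAppend_succ_of_lt i hi, edgeSegment]

lemma edgeSegment_pathAppend_of_ge (hjoin : E₁ (Fin.last m) = E₂ 0) (i : Fin (m + s))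
    (hi : m ≤ (i : ℕ)) :
    edgeSegment (pathAppend E₁ E₂) i = edgeSegment E₂ ⟨i - m, by omega⟩ := by
  rw [edgeSegment, pathAppend_castSucc_of_ge hjoin i hi, pathAppend_succ_of_ge hjoin i hi,
    edgeSegment]

lemma DirConsistent.pathAppend {d : Fin (m + s) → Dir}
    (h₁ : DirConsistent (fun i : Fin m => d (Fin.castLE (Nat.le_add_right m s) i)) E₁)
    (h₂ : DirConsistent (fun i : Fin s => d ⟨m + (i : ℕ), Nat.add_lt_add_left i.isLt m⟩) E₂)
    (hjoin : E₁ (Fin.last m) = E₂ 0) :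
    DirConsistent d (pathAppend E₁ E₂) := by
  intro i
  rcases lt_or_ge (i : ℕ) m with hi | hi
  · rw [pathAppend_castSucc_of_lt i hi, pathAppend_succ_of_lt i hi]
    exact h₁ ⟨i, hi⟩
  · rw [pathAppend_castSucc_of_ge hjoin i hi, pathAppend_succ_of_ge hjoin i hi]
    have hidx : (⟨m + (i - m), by omega⟩ : Fin (m + s)) = i := Fin.ext (by simp; omega)
    simpa only [hidx] using h₂ ⟨i - m, by omega⟩

lemma PlanarDrawing.pathAppend (h₁ : PlanarDrawing E₁) (h₂ : PlanarDrawing E₂)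
    (inj₁ : E₁.Injective) (inj₂ : E₂.Injective) (hjoin : E₁ (Fin.last m) = E₂ 0)
    (hcross : ∀ i j, edgeSegment E₁ i ∩ edgeSegment E₂ j ⊆ {E₂ 0}) :
    PlanarDrawing (pathAppend E₁ E₂) := by
  have hmixed : ∀ i j, ∀ p ∈ edgeSegment E₁ i ∩ edgeSegment E₂ j,
      (i : ℕ) + 1 = m ∧ (j : ℕ) = 0 := by
    intro i j p hp
    have hp₀ : p = E₂ 0 := hcross i j hp
    exact ⟨h₁.succ_eq_of_last_mem inj₁ i (hjoin ▸ hp₀ ▸ hp.1),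
      h₂.eq_zero_of_zero_mem inj₂ j (hp₀ ▸ hp.2)⟩
  constructor
  · intro i j hij
    change edgeSegment _ i ∩ edgeSegment _ j = ∅
    rcases lt_or_ge (j : ℕ) m with hj | hj
    · rw [edgeSegment_pathAppend_of_lt i (by omega), edgeSegment_pathAppend_of_lt j hj]
      exact h₁.1 _ _ hij
    rcases lt_or_ge (i : ℕ) m with hi | hi
    · rw [edgeSegment_pathAppend_of_lt i hi, edgeSegment_pathAppend_of_ge hjoin j hj]
      refine Set.eq_empty_of_forall_notMem fun p hp => ?_
      have := hmixed _ _ p hp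
      simp only at this
      omega
    · rw [edgeSegment_pathAppend_of_ge hjoin i hi, edgeSegment_pathAppend_of_ge hjoin j hj]
      exact h₂.1 _ _ (by simp only; omega)
  · intro i j hij
    change edgeSegment _ i ∩ edgeSegment _ j = {_}
    rcases lt_or_ge (j : ℕ) m with hj | hj
    · rw [edgeSegment_pathAppend_of_lt i (by omega), edgeSegment_pathAppend_of_lt j hj,
        pathAppend_succ_of_lt i (by omega)]
      exact h₁.2 _ _ hij
    rcases lt_or_ge (i : ℕ) m with hi | hi
    · rw [edgeSegment_pathAppend_of_lt i hi, edgeSegment_pathAppend_of_ge hjoin j hj,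
        pathAppend_succ_of_lt i hi]
      have hlast : Fin.succ ⟨i, hi⟩ = Fin.last m := Fin.ext (by simp; omega)
      have hfirst : Fin.castSucc ⟨j - m, by omega⟩ = (0 : Fin (s + 1)) :=
        Fin.ext (by simp; omega)
      rw [hlast, hjoin]
      refine (hcross _ _).antisymm ?_
      rintro _ rfl
      exact ⟨hjoin ▸ hlast ▸ right_mem_segment ℝ _ _, hfirst ▸ left_mem_segment ℝ _ _⟩
    · rw [edgeSegment_pathAppend_of_ge hjoin i hi, edgeSegment_pathAppend_of_ge hjoin j hj,
        pathAppend_succ_of_ge hjoin i hi]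
      exact h₂.2 _ _ (by simp only; omega)

lemma EmbOn.pathAppend {A B : Set (ℝ × ℝ)} (h₁ : EmbOn E₁ A) (h₂ : EmbOn E₂ B)
    (hjoin : E₁ (Fin.last m) = E₂ 0) (hAB : A ∩ B ⊆ {E₂ 0}) :
    EmbOn (pathAppend E₁ E₂) (A ∪ B) := by
  refine ⟨h₁.1.pathAppend h₂.1 hjoin fun k l h => ?_, ?_⟩
  · have hl : E₂ l = E₂ 0 :=
      hAB ⟨h₁.2 ▸ h ▸ Set.mem_range_self k, h₂.2 ▸ Set.mem_range_self l⟩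
    exact ⟨h₁.1 (h.trans (hl.trans hjoin.symm)), h₂.1 hl⟩
  · rw [range_pathAppend hjoin, h₁.2, h₂.2]

end Drawing

section Cross

lemma cross_self_left (b t : ℝ × ℝ) : cross b t b = 0 := by simp [cross]

lemma cross_self_right (b t : ℝ × ℝ) : cross b t t = 0 := by rw [cross]; ring

lemma cross_combo (b t x y : ℝ × ℝ) {a c : ℝ} (hac : a + c = 1) :
    cross b t (a • x + c • y) = a * cross b t x + c * cross b t y := by
  obtain rfl : c = 1 - a := by linarith
  simp only [cross, Prod.fst_add, Prod.snd_add, Prod.smul_fst, Prod.smul_snd, smul_eq_mul]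
  ring

lemma convex_cross_nonpos (b t : ℝ × ℝ) : Convex ℝ {p | cross b t p ≤ 0} := by
  intro x hx y hy a c ha hc hac
  change cross b t x ≤ 0 at hx
  change cross b t y ≤ 0 at hy
  change cross b t (a • x + c • y) ≤ 0
  rw [cross_combo b t x y hac]
  exact add_nonpos (mul_nonpos_of_nonneg_of_nonpos ha hx)
    (mul_nonpos_of_nonneg_of_nonpos hc hy)

lemma eq_of_mem_segment_of_cross_nonpos {b t x y p : ℝ × ℝ} (hx : x = b ∨ 0 < cross b t x)
    (hy : y = b ∨ 0 < cross b t y) (hp : p ∈ segment ℝ x y) (hcp : cross b t p ≤ 0) :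
    p = b := by
  obtain ⟨a, c, ha, hc, hac, rfl⟩ := hp
  rw [cross_combo b t x y hac] at hcp
  rcases hx with rfl | hx <;> rcases hy with rfl | hy
  · exact Convex.combo_self hac _
  · obtain rfl : c = 0 := by rw [cross_self_left] at hcp; nlinarith
    simp [show a = 1 by linarith]
  · obtain rfl : a = 0 := by rw [cross_self_left] at hcp; nlinarith
    simp [show c = 1 by linarith]
  · rcases ha.eq_or_lt with rfl | ha
    · nlinarith
    · nlinarith [mul_pos ha hx, mul_nonneg hc hy.le]

lemma collinear_of_cross_eq_zero {b t p : ℝ × ℝ} (hbt : b ≠ t) (h : cross b t p = 0) :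
    Collinear ℝ ({b, t, p} : Set (ℝ × ℝ)) := by
  have hnorm : (t.1 - b.1) ^ 2 + (t.2 - b.2) ^ 2 ≠ 0 := by
    intro h0
    exact hbt (Prod.ext (by nlinarith [sq_nonneg (t.1 - b.1), sq_nonneg (t.2 - b.2)])
      (by nlinarith [sq_nonneg (t.1 - b.1), sq_nonneg (t.2 - b.2)]))
  rw [collinear_iff_of_mem (Set.mem_insert b {t, p})]
  refine ⟨t - b, ?_⟩
  rintro q (rfl | rfl | rfl)
  · exact ⟨0, by simp⟩
  · exact ⟨1, by simp⟩
  · refine ⟨((t.1 - b.1) * (q.1 - b.1) + (t.2 - b.2) * (q.2 - b.2)) /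
      ((t.1 - b.1) ^ 2 + (t.2 - b.2) ^ 2), ?_⟩
    rw [cross] at h
    simp only [vadd_eq_add, Prod.ext_iff, Prod.fst_add, Prod.snd_add, Prod.smul_fst,
      Prod.smul_snd, Prod.fst_sub, Prod.snd_sub, smul_eq_mul]
    constructor
    · field_simp
      linear_combination (b.2 - t.2) * h
    · field_simp
      linear_combination (t.1 - b.1) * h

end Cross

section SplittingLine

variable {S : Set (ℝ × ℝ)} {b t : ℝ × ℝ}

lemma eq_or_cross_pos_of_mem_left {p : ℝ × ℝ} (hp : p ∈ {q ∈ S | 0 < cross b t q} ∪ {b}) :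
    p = b ∨ 0 < cross b t p := by
  rcases hp with ⟨-, hp⟩ | rfl
  exacts [Or.inr hp, Or.inl rfl]

lemma cross_nonpos_of_mem_right {p : ℝ × ℝ} (hp : p ∈ {q ∈ S | cross b t q < 0} ∪ {t, b}) :
    cross b t p ≤ 0 := by
  rcases hp with ⟨-, hp⟩ | rfl | rfl
  exacts [hp.le, (cross_self_right _ _).le, (cross_self_left _ _).le]

lemma left_inter_right_subset :
    ({p ∈ S | 0 < cross b t p} ∪ {b}) ∩ ({p ∈ S | cross b t p < 0} ∪ {t, b}) ⊆ {b} :=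
  fun _ ⟨hl, hr⟩ => (eq_or_cross_pos_of_mem_left hl).resolve_right
    (cross_nonpos_of_mem_right hr).not_gt

lemma left_union_right_eq (hS : NoThreeCollinear S) (hb : b ∈ S) (ht : t ∈ S) (hbt : b ≠ t) :
    ({p ∈ S | 0 < cross b t p} ∪ {b}) ∪ ({p ∈ S | cross b t p < 0} ∪ {t, b}) = S := by
  apply Set.Subset.antisymm
  · rintro p ((⟨hp, -⟩ | rfl) | ⟨hp, -⟩ | rfl | rfl)
    exacts [hp, hb, hp, ht, hb]
  · intro p hp
    by_cases hpb : p = b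
    · exact Or.inl (Or.inr hpb)
    by_cases hpt : p = t
    · exact Or.inr (Or.inr (Or.inl hpt))
    rcases lt_trichotomy (cross b t p) 0 with hc | hc | hc
    · exact Or.inr (Or.inl ⟨hp, hc⟩)
    · exact (hS b hb t ht p hp hbt (Ne.symm hpb) (Ne.symm hpt)
        (collinear_of_cross_eq_zero hbt hc)).elim
    · exact Or.inl (Or.inl ⟨hp, hc⟩)

lemma segment_inter_segment_subset_of_mem_left_right {x y z w : ℝ × ℝ}
    (hx : x ∈ {p ∈ S | 0 < cross b t p} ∪ {b}) (hy : y ∈ {p ∈ S | 0 < cross b t p} ∪ {b})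
    (hz : z ∈ {p ∈ S | cross b t p < 0} ∪ {t, b})
    (hw : w ∈ {p ∈ S | cross b t p < 0} ∪ {t, b}) :
    segment ℝ x y ∩ segment ℝ z w ⊆ {b} := fun _ ⟨hxy, hzw⟩ =>
  eq_of_mem_segment_of_cross_nonpos (eq_or_cross_pos_of_mem_left hx)
    (eq_or_cross_pos_of_mem_left hy) hxy
    ((convex_cross_nonpos b t).segment_subset (cross_nonpos_of_mem_right hz)
      (cross_nonpos_of_mem_right hw) hzw)

end SplittingLine

/-- Case 1 gluing: with `m = |S_ℓ|`, `d_m = D`, `d_{m+1} ∈ {U,R}`, gluing a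
PDCE of the first `m` edges on `S_ℓ ∪ {b(S)}` ending at `b(S)` with a PDCE of the
remaining edges on `S_r ∪ {t(S), b(S)}` starting at `b(S)` gives a PDCE of `P` on `S`. -/
theorem glue_pdce_case1 {m s : ℕ}
    (d : Fin (m + s) → Dir)
    (S : Set (ℝ × ℝ)) (hgen : GenPos S)
    (b t : ℝ × ℝ) (hb : IsBottommost S b) (ht : IsTopmost S t) (hbt : b.1 < t.1)
    (E1 : Fin (m + 1) → ℝ × ℝ)
    (h1 : PDCE (fun i : Fin m => d (Fin.castLE (Nat.le_add_right m s) i)) E1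
      ({p ∈ S | 0 < cross b t p} ∪ {b}))
    (hE1 : E1 (Fin.last m) = b)
    (E2 : Fin (s + 1) → ℝ × ℝ)
    (h2 : PDCE (fun i : Fin s => d ⟨m + (i : ℕ), by omega⟩) E2
      ({p ∈ S | cross b t p < 0} ∪ {t, b}))
    (hE2 : E2 0 = b) :
    PDCE d
      (fun j : Fin (m + s + 1) =>
        if h : (j : ℕ) ≤ m then E1 ⟨(j : ℕ), by omega⟩
        else E2 ⟨(j : ℕ) - m, by have := j.isLt; omega⟩)
      S := by
  obtain ⟨emb₁, dir₁, planar₁⟩ := h1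
  obtain ⟨emb₂, dir₂, planar₂⟩ := h2
  have hjoin : E1 (Fin.last m) = E2 0 := hE1.trans hE2.symm
  have hcross : ∀ i j, edgeSegment E1 i ∩ edgeSegment E2 j ⊆ {E2 0} := fun i j =>
    hE2 ▸ segment_inter_segment_subset_of_mem_left_right
      (emb₁.2 ▸ Set.mem_range_self _) (emb₁.2 ▸ Set.mem_range_self _)
      (emb₂.2 ▸ Set.mem_range_self _) (emb₂.2 ▸ Set.mem_range_self _)
  have hcover := left_union_right_eq hgen.1 hb.1 ht.1 (fun h => hbt.ne (congrArg Prod.fst h))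
  show PDCE d (pathAppend E1 E2) S
  exact ⟨hcover ▸ emb₁.pathAppend emb₂ hjoin (hE2 ▸ left_inter_right_subset),
    dir₁.pathAppend dir₂ hjoin, planar₁.pathAppend planar₂ emb₁.1 emb₂.1 hjoin hcross⟩
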